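/- arXiv:2408.08557 — 2 statements merged into one kernel-verified Lean document; each statement's English description precedes it below -/
import Mathlib

section
/- Let φ be an LTL∨PSL formula, D = (I⁺, I⁻) a partition of the set I of subformulae of φ of the form s ≼ s', and A_{φ_D} the generalised nondeterministic Büchi automaton associated with φ_D. If the language of A_{φ_D} is non-empty, then φ_D is SLTL-satisfiable. -/
/-! ### SLTL: syntax, models, satisfaction -/

inductive SForm : Type where
  | var : ℕ → SForm
  | le : ℕ → ℕ → SForm
  | tru : SForm
  | fls : SForm
  | neg : SForm → SForm
  | conj : SForm → SForm → SForm
  | dia : ℕ → SForm → SForm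
  | box : ℕ → SForm → SForm
  | next : SForm → SForm
  | until_ : SForm → SForm → SForm

/-- Traces: ω-sequences of propositional valuations. -/
abbrev Trace := ℕ → Set ℕ

/-- An SLTL model `(Π, λ)`; standpoint symbols are natural numbers, `0` is the
universal standpoint `*`. -/
structure SLTLModel where
  Pi : Set Trace
  lam : ℕ → Set Trace
  pi_nonempty : Pi.Nonempty
  lam_sub : ∀ s, lam s ⊆ Pi
  lam_nonempty : ∀ s, (lam s).Nonempty
  lam_star : lam 0 = Pi

def SSat (M : SLTLModel) : SForm → Trace → ℕ → Prop
  | .var p, σ, i => p ∈ σ i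
  | .le s s', _, _ => M.lam s ⊆ M.lam s'
  | .tru, _, _ => True
  | .fls, _, _ => False
  | .neg a, σ, i => ¬ SSat M a σ i
  | .conj a b, σ, i => SSat M a σ i ∧ SSat M b σ i
  | .dia s a, _, i => ∃ σ' ∈ M.lam s, SSat M a σ' i
  | .box s a, _, i => ∀ σ' ∈ M.lam s, SSat M a σ' i
  | .next a, σ, i => SSat M a σ (i + 1)
  | .until_ a b, σ, i =>
      ∃ i', i ≤ i' ∧ SSat M b σ i' ∧ ∀ i'', i ≤ i'' → i'' < i' → SSat M a σ i''

def SLTLSatisfiable (φ : SForm) : Prop :=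
  ∃ M : SLTLModel, ∃ σ ∈ M.Pi, SSat M φ σ 0

def SForm.impl (a b : SForm) : SForm := .neg (.conj a (.neg b))
def SForm.iffc (a b : SForm) : SForm := .conj (a.impl b) (b.impl a)
/-- `G φ := ¬(⊤ U ¬φ)`. -/
def SForm.G (a : SForm) : SForm := .neg (.until_ .tru (.neg a))
def bigAnd (l : List SForm) : SForm := l.foldr .conj .tru
/-- The list `[a, a+1, …, b]`. -/
def listIcc (a b : ℕ) : List ℕ := (List.range (b + 1 - a)).map (fun k => a + k)

/-- Propositional variables occurring in a formula. -/
def varsSF : SForm → Finset ℕ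
  | .var p => {p}
  | .le _ _ => ∅
  | .tru => ∅
  | .fls => ∅
  | .neg a => varsSF a
  | .conj a b => varsSF a ∪ varsSF b
  | .dia _ a => varsSF a
  | .box _ a => varsSF a
  | .next a => varsSF a
  | .until_ a b => varsSF a ∪ varsSF b

/-- Standpoint symbols occurring in a formula. -/
def standsSF : SForm → Finset ℕ
  | .var _ => ∅
  | .le s s' => {s, s'}
  | .tru => ∅
  | .fls => ∅
  | .neg a => standsSF a
  | .conj a b => standsSF a ∪ standsSF b
  | .dia s a => insert s (standsSF a)
  | .box s a => insert s (standsSF a)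
  | .next a => standsSF a
  | .until_ a b => standsSF a ∪ standsSF b

/-- No temporal connective (`X` or `U`) occurs in the formula. -/
def noTemp : SForm → Prop
  | .neg a => noTemp a
  | .conj a b => noTemp a ∧ noTemp b
  | .dia _ a => noTemp a
  | .box _ a => noTemp a
  | .next _ => False
  | .until_ _ _ => False
  | _ => True

/-- The fragment LTL∨PSL: no temporal connective occurs within the scope of a
standpoint modality. -/
def isLTLPSL : SForm → Prop
  | .neg a => isLTLPSL a
  | .conj a b => isLTLPSL a ∧ isLTLPSL b
  | .dia _ a => noTemp a
  | .box _ a => noTemp a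
  | .next a => isLTLPSL a
  | .until_ a b => isLTLPSL a ∧ isLTLPSL b
  | _ => True

def sizeSF : SForm → ℕ
  | .var _ => 1
  | .le _ _ => 1
  | .tru => 1
  | .fls => 1
  | .neg a => sizeSF a + 1
  | .conj a b => sizeSF a + sizeSF b + 1
  | .dia _ a => sizeSF a + 1
  | .box _ a => sizeSF a + 1
  | .next a => sizeSF a + 1
  | .until_ a b => sizeSF a + sizeSF b + 1

/-! ### The formula `φ_D` for a partition `D = (I⁺, I⁻)` of the `≼`-subformulae -/

/-- The pairs `(s, s')` such that `s ≼ s'` is a subformula of the given formula. -/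
def leSubs : SForm → Finset (ℕ × ℕ)
  | .var _ => ∅
  | .le s s' => {(s, s')}
  | .tru => ∅
  | .fls => ∅
  | .neg a => leSubs a
  | .conj a b => leSubs a ∪ leSubs b
  | .dia _ a => leSubs a
  | .box _ a => leSubs a
  | .next a => leSubs a
  | .until_ a b => leSubs a ∪ leSubs b

/-- `φ[I⁺ ↦ ⊤, I⁻ ↦ ⊥]`: replace each subformula `s ≼ s'` with `(s,s') ∈ P`
by `⊤` and each with `(s,s') ∈ N` by `⊥`. -/
def substLe (P N : Finset (ℕ × ℕ)) : SForm → SForm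
  | .var p => .var p
  | .le s s' => if (s, s') ∈ P then .tru else if (s, s') ∈ N then .fls else .le s s'
  | .tru => .tru
  | .fls => .fls
  | .neg a => .neg (substLe P N a)
  | .conj a b => .conj (substLe P N a) (substLe P N b)
  | .dia s a => .dia s (substLe P N a)
  | .box s a => .box s (substLe P N a)
  | .next a => .next (substLe P N a)
  | .until_ a b => .until_ (substLe P N a) (substLe P N b)

/-- `ψ_D := G( ⋀_{(s≼s')∈I⁺} (s ≼ s') ∧ ⋀_{(s≼s')∈I⁻} (◇_s p_{s,s'} ∧ ¬◇_{s'} p_{s,s'}) )`,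
where `pv (s,s')` is the fresh variable `p_{s,s'}`. -/
noncomputable def psiD (P N : Finset (ℕ × ℕ)) (pv : ℕ × ℕ → ℕ) : SForm :=
  SForm.G (.conj
    (bigAnd (P.toList.map (fun pr => SForm.le pr.1 pr.2)))
    (bigAnd (N.toList.map (fun pr =>
      SForm.conj (.dia pr.1 (.var (pv pr))) (.neg (.dia pr.2 (.var (pv pr))))))))

/-- `φ_D := φ[I⁺ ↦ ⊤, I⁻ ↦ ⊥] ∧ ψ_D`. -/
noncomputable def phiD (φ : SForm) (P N : Finset (ℕ × ℕ)) (pv : ℕ × ℕ → ℕ) : SForm :=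
  .conj (substLe P N φ) (psiD P N pv)

/-! ### The closure, s-elementary sets, and the generalised Büchi automaton -/

/-- Subformulae of a formula. -/
def subfs : SForm → Set SForm
  | .var p => {SForm.var p}
  | .le s s' => {SForm.le s s'}
  | .tru => {SForm.tru}
  | .fls => {SForm.fls}
  | .neg a => insert (SForm.neg a) (subfs a)
  | .conj a b => insert (SForm.conj a b) (subfs a ∪ subfs b)
  | .dia s a => insert (SForm.dia s a) (subfs a)
  | .box s a => insert (SForm.box s a) (subfs a)
  | .next a => insert (SForm.next a) (subfs a)
  | .until_ a b => insert (SForm.until_ a b) (subfs a ∪ subfs b)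

/-- Negation, identifying `¬¬ψ` with `ψ`. -/
def negId : SForm → SForm
  | .neg a => a
  | a => .neg a

/-- The closure `cl(φ)`: the smallest set containing all subformulae of `φ`,
`⊤` and `⊥`, closed under negation (identifying `¬¬ψ` with `ψ`), and
containing `X(ψ U ψ')` whenever `ψ U ψ'` is in it. -/
inductive Cl (φ : SForm) : SForm → Prop where
  | base {ψ} : ψ ∈ subfs φ → Cl φ ψ
  | tru : Cl φ .tru
  | fls : Cl φ .fls
  | nc {ψ} : Cl φ ψ → Cl φ (negId ψ)
  | nextU {a b} : Cl φ (.until_ a b) → Cl φ (.next (.until_ a b))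

/-- A PSL model with a finite nonempty set `W` of precisifications;
`Vs` is the valuation on standpoint symbols (with `0` the universal
standpoint `*`) and `Vp` the valuation on propositional variables. -/
structure PSLM (W : Type) where
  Vs : ℕ → Set W
  Vp : ℕ → Set W
  hfin : Finite W
  hne : Nonempty W
  hs : ∀ s, (Vs s).Nonempty
  hstar : Vs 0 = Set.univ

/-- PSL satisfaction of an SLTL formula without temporal connectives
(the clauses for `X` and `U` are never used on PSL formulae). -/
def FSat {W : Type} (M : PSLM W) : SForm → W → Prop
  | .var p, π => π ∈ M.Vp p
  | .le s s', _ => M.Vs s ⊆ M.Vs s'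
  | .tru, _ => True
  | .fls, _ => False
  | .neg a, π => ¬ FSat M a π
  | .conj a b, π => FSat M a π ∧ FSat M b π
  | .dia s a, _ => ∃ π' ∈ M.Vs s, FSat M a π'
  | .box s a, _ => ∀ π' ∈ M.Vs s, FSat M a π'
  | .next _, _ => False
  | .until_ _ _, _ => False

/-- `B` is standpoint-consistent: the conjunction of all PSL formulae in `B`
is PSL-satisfiable. -/
def StandCons (B : Set SForm) : Prop :=
  ∃ (W : Type) (M : PSLM W) (π : W), ∀ ψ ∈ B, noTemp ψ → FSat M ψ π

/-- `B ⊆ cl(φ)` is maximally consistent. -/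
def MaxCons (φ : SForm) (B : Set SForm) : Prop :=
  (∀ ψ ∈ B, Cl φ ψ) ∧ SForm.tru ∈ B ∧ SForm.fls ∉ B ∧
  (∀ ψ, Cl φ (.neg ψ) → (ψ ∈ B ↔ SForm.neg ψ ∉ B)) ∧
  (∀ a b, Cl φ (.conj a b) → (SForm.conj a b ∈ B ↔ a ∈ B ∧ b ∈ B)) ∧
  (∀ a b, Cl φ (.until_ a b) →
    (SForm.until_ a b ∈ B ↔ b ∈ B ∨ (a ∈ B ∧ SForm.next (.until_ a b) ∈ B)))

/-- s-elementary: maximally consistent and standpoint-consistent. -/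
def SElem (φ : SForm) (B : Set SForm) : Prop := MaxCons φ B ∧ StandCons B

/-- `B₀B₁…` is an accepting run of the generalised nondeterministic Büchi
automaton `A_φ` on the word `A₀A₁…`:  `B₀` is initial (`φ ∈ B₀`), every `Bᵢ`
is a state (s-elementary), `Aᵢ = Bᵢ ∩ P(φ)`, consecutive states respect the
transition relation, and every accepting set is visited infinitely often. -/
def AcceptingRun (φ : SForm) (B : ℕ → Set SForm) (A : ℕ → Set ℕ) : Prop :=
  φ ∈ B 0 ∧ (∀ i, SElem φ (B i)) ∧
  (∀ i, A i = {p : ℕ | SForm.var p ∈ B i ∧ p ∈ varsSF φ}) ∧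
  (∀ i ψ, Cl φ (.next ψ) → (SForm.next ψ ∈ B i ↔ ψ ∈ B (i + 1))) ∧
  (∀ a b, Cl φ (.until_ a b) → ∀ i, ∃ j, i ≤ j ∧ (SForm.until_ a b ∉ B j ∨ b ∈ B j))

/-- The language of `A_φ` is non-empty. -/
def LangNonempty (φ : SForm) : Prop :=
  ∃ (B : ℕ → Set SForm) (A : ℕ → Set ℕ), AcceptingRun φ B A

/-!
Each state `Bᵢ` of an accepting run is standpoint-consistent, so it comes with a PSL model
`Mᵢ` and a precisification `πᵢ` satisfying its temporal-free formulae. Take as traces the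
sequences `f` with `f i` a precisification of `Mᵢ`, read through the valuations of the `Mᵢ`,
and put into `λ(s)` the sequences with `f i ∈ Vᵢ(s)` for every `i`. The choices at different
instants are independent, so a standpoint modality evaluated at instant `i` ranges over exactly
the precisifications of `Mᵢ`: a temporal-free formula holds on the trace of `f` at `i` iff it
holds in `Mᵢ` at `f i`, as long as each `s ≼ s'` occurring in it holds in every `Mⱼ`. For `φ_D`
the substitution leaves only the `s ≼ s'` with `(s, s') ∈ I⁺`, and the conjunct `ψ_D = G(…)`
puts those into every `Bⱼ`. In LTL∨PSL every formula of the closure is temporal-free or has a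
temporal or Boolean main connective, so the usual truth lemma of the tableau construction,
with the acceptance condition fulfilling the eventualities of `U`, shows that the trace of
`i ↦ πᵢ` satisfies every formula of `B₀`, in particular `φ_D`.
-/

@[simp]
theorem mem_subfs_self (ψ : SForm) : ψ ∈ subfs ψ := by
  cases ψ <;> simp [subfs]

theorem mem_subfs_trans {ψ χ ρ : SForm} (hχ : χ ∈ subfs ψ) (hρ : ρ ∈ subfs χ) :
    ρ ∈ subfs ψ := by
  induction ψ with
  | neg a ih | dia _ a ih | box _ a ih | next a ih =>
    rcases hχ with rfl | hχ
    · exact hρ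
    · exact Or.inr (ih hχ)
  | conj a b iha ihb | until_ a b iha ihb =>
    rcases hχ with rfl | hχ | hχ
    · exact hρ
    · exact Or.inr (Or.inl (iha hχ))
    · exact Or.inr (Or.inr (ihb hχ))
  | _ => obtain rfl := Set.mem_singleton_iff.1 hχ; exact hρ

theorem subfs_negId_subset (ψ : SForm) : subfs (negId ψ) ⊆ insert (negId ψ) (subfs ψ) := by
  cases ψ with
  | neg a => exact (Set.subset_insert _ _).trans (Set.subset_insert _ _)
  | _ => exact subset_rfl

theorem Cl.of_mem_subfs {Φ ψ χ : SForm} (h : Cl Φ ψ) (hχ : χ ∈ subfs ψ) : Cl Φ χ := by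
  induction h generalizing χ with
  | base hψ => exact .base (mem_subfs_trans hψ hχ)
  | tru => obtain rfl := Set.mem_singleton_iff.1 hχ; exact .tru
  | fls => obtain rfl := Set.mem_singleton_iff.1 hχ; exact .fls
  | nc h ih =>
    rcases subfs_negId_subset _ hχ with rfl | hχ
    · exact .nc h
    · exact ih hχ
  | nextU h ih =>
    rcases hχ with rfl | hχ
    · exact .nextU h
    · exact ih hχ

theorem leSubs_subset_of_mem_subfs {ψ χ : SForm} (hχ : χ ∈ subfs ψ) : leSubs χ ⊆ leSubs ψ := by
  induction ψ with
  | neg a ih | dia _ a ih | box _ a ih | next a ih =>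
    rcases hχ with rfl | hχ
    · exact subset_rfl
    · exact ih hχ
  | conj a b iha ihb | until_ a b iha ihb =>
    rcases hχ with rfl | hχ | hχ
    · exact subset_rfl
    · exact (iha hχ).trans Finset.subset_union_left
    · exact (ihb hχ).trans Finset.subset_union_right
  | _ => obtain rfl := Set.mem_singleton_iff.1 hχ; exact subset_rfl

theorem leSubs_negId (ψ : SForm) : leSubs (negId ψ) = leSubs ψ := by
  cases ψ <;> rfl

theorem Cl.leSubs_subset {Φ ψ : SForm} (h : Cl Φ ψ) : leSubs ψ ⊆ leSubs Φ := by
  induction h with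
  | base hψ => exact leSubs_subset_of_mem_subfs hψ
  | tru | fls => exact Finset.empty_subset _
  | nc _ ih => rwa [leSubs_negId]
  | nextU _ ih => exact ih

theorem noTemp.of_mem_subfs {ψ χ : SForm} (hψ : noTemp ψ) (hχ : χ ∈ subfs ψ) : noTemp χ := by
  induction ψ with
  | neg a ih | dia _ a ih | box _ a ih =>
    rcases hχ with rfl | hχ
    · exact hψ
    · exact ih hψ hχ
  | conj a b iha ihb =>
    rcases hχ with rfl | hχ | hχ
    · exact hψ
    · exact iha hψ.1 hχ
    · exact ihb hψ.2 hχ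
  | next | until_ => exact hψ.elim
  | _ => obtain rfl := Set.mem_singleton_iff.1 hχ; exact hψ

theorem noTemp.isLTLPSL {ψ : SForm} (hψ : noTemp ψ) : isLTLPSL ψ := by
  induction ψ with
  | neg a ih => exact ih hψ
  | conj a b iha ihb => exact ⟨iha hψ.1, ihb hψ.2⟩
  | dia | box => exact hψ
  | next | until_ => exact hψ.elim
  | _ => trivial

theorem isLTLPSL.of_mem_subfs {ψ χ : SForm} (hψ : isLTLPSL ψ) (hχ : χ ∈ subfs ψ) :
    isLTLPSL χ := by
  induction ψ with
  | neg a ih | next a ih =>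
    rcases hχ with rfl | hχ
    · exact hψ
    · exact ih hψ hχ
  | dia _ a _ | box _ a _ =>
    rcases hχ with rfl | hχ
    · exact hψ
    · exact (noTemp.of_mem_subfs (ψ := a) hψ hχ).isLTLPSL
  | conj a b iha ihb | until_ a b iha ihb =>
    rcases hχ with rfl | hχ | hχ
    · exact hψ
    · exact iha hψ.1 hχ
    · exact ihb hψ.2 hχ
  | _ => obtain rfl := Set.mem_singleton_iff.1 hχ; exact hψ

theorem isLTLPSL_negId (ψ : SForm) : isLTLPSL (negId ψ) ↔ isLTLPSL ψ := by
  cases ψ <;> rfl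

theorem isLTLPSL_of_cl {Φ ψ : SForm} (hΦ : isLTLPSL Φ) (h : Cl Φ ψ) : isLTLPSL ψ := by
  induction h with
  | base hψ => exact hΦ.of_mem_subfs hψ
  | tru | fls => trivial
  | nc _ ih => exact (isLTLPSL_negId _).2 ih
  | nextU _ ih => exact ih

theorem leSubs_substLe (P N : Finset (ℕ × ℕ)) (ψ : SForm) :
    leSubs (substLe P N ψ) = leSubs ψ \ (P ∪ N) := by
  induction ψ with
  | le s s' =>
    simp only [substLe, leSubs]
    split_ifs <;> ext <;> simp only [leSubs] <;> grind
  | conj a b iha ihb | until_ a b iha ihb =>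
    simp only [substLe, leSubs, iha, ihb, Finset.union_sdiff_distrib]
  | neg a ih | dia _ a ih | box _ a ih | next a ih => simpa only [substLe, leSubs] using ih
  | _ => simp [substLe, leSubs]

theorem noTemp_substLe (P N : Finset (ℕ × ℕ)) {ψ : SForm} (hψ : noTemp ψ) :
    noTemp (substLe P N ψ) := by
  induction ψ with
  | le s s' => simp only [substLe]; split_ifs <;> trivial
  | neg a ih | dia _ a ih | box _ a ih => exact ih hψ
  | conj a b iha ihb => exact ⟨iha hψ.1, ihb hψ.2⟩
  | next | until_ => exact hψ.elim
  | _ => trivial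

theorem isLTLPSL_substLe (P N : Finset (ℕ × ℕ)) {ψ : SForm} (hψ : isLTLPSL ψ) :
    isLTLPSL (substLe P N ψ) := by
  induction ψ with
  | le s s' => simp only [substLe]; split_ifs <;> trivial
  | neg a ih | next a ih => exact ih hψ
  | dia _ a _ | box _ a _ => exact noTemp_substLe P N (ψ := a) hψ
  | conj a b iha ihb | until_ a b iha ihb => exact ⟨iha hψ.1, ihb hψ.2⟩
  | _ => trivial

theorem mem_leSubs_bigAnd {l : List SForm} {pr : ℕ × ℕ} :
    pr ∈ leSubs (bigAnd l) ↔ ∃ ψ ∈ l, pr ∈ leSubs ψ := by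
  induction l with
  | nil => simp [bigAnd, leSubs]
  | cons ψ l ih => simp [bigAnd, leSubs, ← ih]

theorem isLTLPSL_bigAnd {l : List SForm} : isLTLPSL (bigAnd l) ↔ ∀ ψ ∈ l, isLTLPSL ψ := by
  induction l with
  | nil => simp [bigAnd, isLTLPSL]
  | cons ψ l ih => simp [bigAnd, isLTLPSL, ← ih]

theorem leSubs_phiD_subset {φ : SForm} {P N : Finset (ℕ × ℕ)} (pv : ℕ × ℕ → ℕ)
    (hpart : P ∪ N = leSubs φ) : leSubs (phiD φ P N pv) ⊆ P := by
  intro pr hpr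
  simp [phiD, psiD, SForm.G, leSubs, leSubs_substLe, hpart, mem_leSubs_bigAnd] at hpr
  obtain ⟨s, s', hP, rfl⟩ := hpr
  exact hP

theorem isLTLPSL_phiD {φ : SForm} (P N : Finset (ℕ × ℕ)) (pv : ℕ × ℕ → ℕ) (hφ : isLTLPSL φ) :
    isLTLPSL (phiD φ P N pv) := by
  refine ⟨isLTLPSL_substLe P N hφ, trivial, isLTLPSL_bigAnd.2 ?_, isLTLPSL_bigAnd.2 ?_⟩ <;>
    · simp only [List.mem_map]
      rintro _ ⟨_, _, rfl⟩
      trivial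

section SeqModel

variable {W : ℕ → Type} (M : ∀ i, PSLM (W i))

def traceOf (f : ∀ i, W i) : Trace := fun i => {p | f i ∈ (M i).Vp p}

def choicesIn (s : ℕ) : Set (∀ i, W i) := Set.univ.pi fun i => (M i).Vs s

theorem choicesIn_nonempty (s : ℕ) : (choicesIn M s).Nonempty :=
  Set.univ_pi_nonempty_iff.2 fun i => (M i).hs s

theorem choicesIn_zero : choicesIn M 0 = Set.univ := by
  simp [choicesIn, PSLM.hstar]

theorem eval_image_choicesIn (s i : ℕ) : (fun f => f i) '' choicesIn M s = (M i).Vs s :=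
  Set.eval_image_univ_pi (choicesIn_nonempty M s)

def modelOfSeq : SLTLModel where
  Pi := Set.range (traceOf M)
  lam s := traceOf M '' choicesIn M s
  pi_nonempty := ((choicesIn_nonempty M 0).image _).mono (Set.image_subset_range _ _)
  lam_sub _ := Set.image_subset_range _ _
  lam_nonempty s := (choicesIn_nonempty M s).image _
  lam_star := by rw [choicesIn_zero, Set.image_univ]

theorem SSat_modelOfSeq_iff_FSat {χ : SForm} (hχ : noTemp χ)
    (hle : ∀ pr ∈ leSubs χ, ∀ j, (M j).Vs pr.1 ⊆ (M j).Vs pr.2) (f : ∀ i, W i) (i : ℕ) :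
    SSat (modelOfSeq M) χ (traceOf M f) i ↔ FSat (M i) χ (f i) := by
  induction χ generalizing f with
  | var p => rfl
  | le s s' =>
    have hss' := hle (s, s') (Finset.mem_singleton_self _)
    exact iff_of_true (Set.image_mono (Set.pi_mono fun j _ => hss' j)) (hss' i)
  | tru | fls => rfl
  | neg a ih => exact not_congr (ih hχ hle f)
  | conj a b iha ihb =>
    exact and_congr (iha hχ.1 (fun pr h => hle pr (Finset.mem_union_left _ h)) f)
      (ihb hχ.2 (fun pr h => hle pr (Finset.mem_union_right _ h)) f)
  | dia s a ih =>
    change (∃ σ ∈ traceOf M '' choicesIn M s, _) ↔ ∃ π ∈ (M i).Vs s, _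
    simp only [Set.exists_mem_image, ih hχ hle, ← eval_image_choicesIn M s i]
  | box s a ih =>
    change (∀ σ ∈ traceOf M '' choicesIn M s, _) ↔ ∀ π ∈ (M i).Vs s, _
    simp only [Set.forall_mem_image, ih hχ hle, ← eval_image_choicesIn M s i]
  | next | until_ => exact hχ.elim

end SeqModel

namespace MaxCons

variable {Φ : SForm} {B : Set SForm}

theorem cl_of_mem (hB : MaxCons Φ B) {ψ : SForm} (hψ : ψ ∈ B) : Cl Φ ψ := hB.1 ψ hψ

theorem tru_mem (hB : MaxCons Φ B) : SForm.tru ∈ B := hB.2.1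

theorem neg_mem_iff (hB : MaxCons Φ B) {ψ : SForm} (h : Cl Φ (.neg ψ)) :
    SForm.neg ψ ∈ B ↔ ψ ∉ B :=
  iff_not_comm.1 (hB.2.2.2.1 ψ h)

theorem conj_mem_iff (hB : MaxCons Φ B) {a b : SForm} (h : Cl Φ (.conj a b)) :
    SForm.conj a b ∈ B ↔ a ∈ B ∧ b ∈ B :=
  hB.2.2.2.2.1 a b h

theorem until_mem_iff (hB : MaxCons Φ B) {a b : SForm} (h : Cl Φ (.until_ a b)) :
    SForm.until_ a b ∈ B ↔ b ∈ B ∨ (a ∈ B ∧ SForm.next (.until_ a b) ∈ B) :=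
  hB.2.2.2.2.2 a b h

theorem mem_of_bigAnd_mem (hB : MaxCons Φ B) {l : List SForm} (hmem : bigAnd l ∈ B)
    {ψ : SForm} (hψ : ψ ∈ l) : ψ ∈ B := by
  induction l with
  | nil => cases hψ
  | cons χ l ih =>
    rw [bigAnd, List.foldr_cons, ← bigAnd] at hmem
    have hχl := (hB.conj_mem_iff (hB.cl_of_mem hmem)).1 hmem
    rcases List.mem_cons.1 hψ with rfl | hψ
    · exact hχl.1
    · exact ih hχl.2 hψ

/-- Both `χ` and its negation lie in the closure, so one of them is in `B` and hence true at `π`. -/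
theorem mem_iff_FSat (hB : MaxCons Φ B) {W : Type} {M : PSLM W} {π : W}
    (hπ : ∀ ψ ∈ B, noTemp ψ → FSat M ψ π) {χ : SForm} (hcl : Cl Φ χ) (hχ : noTemp χ) :
    χ ∈ B ↔ FSat M χ π := by
  refine ⟨fun h => hπ χ h hχ, fun hsat => ?_⟩
  by_contra hnot
  cases χ with
  | neg a => exact hsat (hπ a (not_not.1 (mt (hB.neg_mem_iff hcl).2 hnot)) hχ)
  | _ => exact hπ _ ((hB.neg_mem_iff (.nc hcl)).2 hnot) hχ hsat

end MaxCons

section Run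

variable {Φ : SForm} {B : ℕ → Set SForm} (hm : ∀ i, MaxCons Φ (B i))
  (hX : ∀ i ψ, Cl Φ (.next ψ) → (SForm.next ψ ∈ B i ↔ ψ ∈ B (i + 1)))
include hm hX

theorem until_mem_iff_next {a b : SForm} (h : Cl Φ (.until_ a b)) (i : ℕ) :
    SForm.until_ a b ∈ B i ↔ b ∈ B i ∨ (a ∈ B i ∧ SForm.until_ a b ∈ B (i + 1)) := by
  rw [(hm i).until_mem_iff h, hX i _ (.nextU h)]

theorem until_mem_of_witness {a b : SForm} (h : Cl Φ (.until_ a b)) (d : ℕ) :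
    ∀ i, b ∈ B (i + d) → (∀ m, i ≤ m → m < i + d → a ∈ B m) → SForm.until_ a b ∈ B i := by
  induction d with
  | zero => exact fun i hb _ => (until_mem_iff_next hm hX h i).2 (.inl hb)
  | succ d ih =>
    intro i hb ha
    refine (until_mem_iff_next hm hX h i).2 (.inr ⟨ha i le_rfl (by omega), ?_⟩)
    exact ih (i + 1) (by rwa [Nat.add_right_comm]) fun m h1 h2 => ha m (by omega) (by omega)

theorem exists_witness_of_until_mem {a b : SForm} (h : Cl Φ (.until_ a b)) (d : ℕ) :
    ∀ i, SForm.until_ a b ∈ B i → (SForm.until_ a b ∉ B (i + d) ∨ b ∈ B (i + d)) →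
      ∃ j, i ≤ j ∧ b ∈ B j ∧ ∀ m, i ≤ m → m < j → a ∈ B m := by
  induction d with
  | zero =>
    intro i hi hend
    exact ⟨i, le_rfl, hend.resolve_left (not_not_intro hi), fun m h1 h2 => absurd h2 (by omega)⟩
  | succ d ih =>
    intro i hi hend
    rcases (until_mem_iff_next hm hX h i).1 hi with hb | ⟨ha, hnext⟩
    · exact ⟨i, le_rfl, hb, fun m h1 h2 => absurd h2 (by omega)⟩
    · obtain ⟨j, hij, hb, hpre⟩ := ih (i + 1) hnext (by rwa [Nat.add_right_comm])
      refine ⟨j, by omega, hb, fun m h1 h2 => ?_⟩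
      rcases h1.eq_or_lt with rfl | h1
      · exact ha
      · exact hpre m h1 h2

theorem until_mem_iff_exists {a b : SForm} (h : Cl Φ (.until_ a b))
    (hfair : ∀ i, ∃ j, i ≤ j ∧ (SForm.until_ a b ∉ B j ∨ b ∈ B j)) (i : ℕ) :
    SForm.until_ a b ∈ B i ↔ ∃ j, i ≤ j ∧ b ∈ B j ∧ ∀ m, i ≤ m → m < j → a ∈ B m := by
  constructor
  · intro hi
    obtain ⟨j, hij, hend⟩ := hfair i
    obtain ⟨d, rfl⟩ := Nat.exists_eq_add_of_le hij
    exact exists_witness_of_until_mem hm hX h d i hi hend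
  · rintro ⟨j, hij, hb, ha⟩
    obtain ⟨d, rfl⟩ := Nat.exists_eq_add_of_le hij
    exact until_mem_of_witness hm hX h d i hb ha

theorem mem_of_G_mem {χ : SForm} (h : Cl Φ χ.G) (h0 : χ.G ∈ B 0) (i : ℕ) : χ ∈ B i := by
  have hU : Cl Φ (.until_ .tru (.neg χ)) := h.of_mem_subfs (by simp [SForm.G, subfs])
  have hnχ : Cl Φ (.neg χ) := hU.of_mem_subfs (by simp [subfs])
  by_contra hχ
  refine (hm 0).neg_mem_iff h |>.1 h0 (until_mem_of_witness hm hX hU i 0 ?_ ?_)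
  · rw [zero_add]
    exact ((hm i).neg_mem_iff hnχ).2 hχ
  · exact fun m _ _ => (hm m).tru_mem

end Run

theorem mem_iff_SSat_modelOfSeq {Φ : SForm} {B : ℕ → Set SForm} (hm : ∀ i, MaxCons Φ (B i))
    (hX : ∀ i ψ, Cl Φ (.next ψ) → (SForm.next ψ ∈ B i ↔ ψ ∈ B (i + 1)))
    (hfair : ∀ a b, Cl Φ (.until_ a b) → ∀ i, ∃ j, i ≤ j ∧ (SForm.until_ a b ∉ B j ∨ b ∈ B j))
    (hΦ : isLTLPSL Φ) {W : ℕ → Type} (M : ∀ i, PSLM (W i)) (π : ∀ i, W i)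
    (hπ : ∀ i, ∀ ψ ∈ B i, noTemp ψ → FSat (M i) ψ (π i))
    (hle : ∀ pr ∈ leSubs Φ, ∀ j, (M j).Vs pr.1 ⊆ (M j).Vs pr.2)
    {ψ : SForm} (hψ : Cl Φ ψ) (i : ℕ) :
    ψ ∈ B i ↔ SSat (modelOfSeq M) ψ (traceOf M π) i := by
  have htemp_free {χ : SForm} (hχ : Cl Φ χ) (hnt : noTemp χ) (i : ℕ) :
      χ ∈ B i ↔ SSat (modelOfSeq M) χ (traceOf M π) i :=
    ((hm i).mem_iff_FSat (hπ i) hχ hnt).trans (SSat_modelOfSeq_iff_FSat M hnt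
      (fun pr hpr => hle pr (hχ.leSubs_subset hpr)) π i).symm
  induction ψ generalizing i with
  | var | le | tru | fls => exact htemp_free hψ trivial i
  | dia | box => exact htemp_free hψ (isLTLPSL_of_cl hΦ hψ) i
  | neg a ih =>
    have iha : a ∈ B _ ↔ _ := ih (hψ.of_mem_subfs (by simp [subfs])) i
    rw [(hm i).neg_mem_iff hψ, iha]
    rfl
  | conj a b iha ihb =>
    have iha' : a ∈ B _ ↔ _ := iha (hψ.of_mem_subfs (by simp [subfs])) i
    have ihb' : b ∈ B _ ↔ _ := ihb (hψ.of_mem_subfs (by simp [subfs])) i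
    rw [(hm i).conj_mem_iff hψ, iha', ihb']
    rfl
  | next a ih =>
    have iha : a ∈ B _ ↔ _ := ih (hψ.of_mem_subfs (by simp [subfs])) (i + 1)
    rw [hX i a hψ, iha]
    rfl
  | until_ a b iha ihb =>
    have iha' : ∀ j, a ∈ B j ↔ _ := iha (hψ.of_mem_subfs (by simp [subfs]))
    have ihb' : ∀ j, b ∈ B j ↔ _ := ihb (hψ.of_mem_subfs (by simp [subfs]))
    rw [until_mem_iff_exists hm hX hψ (hfair a b hψ) i]
    simp only [SSat, iha', ihb']

theorem le_mem_of_phiD_mem {φ : SForm} {P N : Finset (ℕ × ℕ)} {pv : ℕ × ℕ → ℕ}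
    {B : ℕ → Set SForm} (hm : ∀ i, MaxCons (phiD φ P N pv) (B i))
    (hX : ∀ i ψ, Cl (phiD φ P N pv) (.next ψ) → (SForm.next ψ ∈ B i ↔ ψ ∈ B (i + 1)))
    (h0 : phiD φ P N pv ∈ B 0) {pr : ℕ × ℕ} (hpr : pr ∈ P) (i : ℕ) :
    SForm.le pr.1 pr.2 ∈ B i := by
  have hψD : psiD P N pv ∈ B 0 := ((hm 0).conj_mem_iff ((hm 0).cl_of_mem h0) |>.1 h0).2
  have hbody := mem_of_G_mem hm hX ((hm 0).cl_of_mem hψD) hψD i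
  have hP := ((hm i).conj_mem_iff ((hm i).cl_of_mem hbody) |>.1 hbody).1
  exact (hm i).mem_of_bigAnd_mem hP (List.mem_map.2 ⟨pr, Finset.mem_toList.2 hpr, rfl⟩)

theorem stmt5_general (φ : SForm) (pv : ℕ × ℕ → ℕ) (P N : Finset (ℕ × ℕ))
    (hφ : isLTLPSL φ)
    (hpart : P ∪ N = leSubs φ) :
    LangNonempty (phiD φ P N pv) → SLTLSatisfiable (phiD φ P N pv) := by
  rintro ⟨B, -, h0, hel, -, hX, hfair⟩
  have hm i : MaxCons (phiD φ P N pv) (B i) := (hel i).1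
  choose W M π hπ using fun i => (hel i).2
  have hle : ∀ pr ∈ leSubs (phiD φ P N pv), ∀ j, (M j).Vs pr.1 ⊆ (M j).Vs pr.2 :=
    fun pr hpr j =>
      hπ j _ (le_mem_of_phiD_mem hm hX h0 (leSubs_phiD_subset pv hpart hpr) j) trivial
  refine ⟨modelOfSeq M, traceOf M π, Set.mem_range_self π, ?_⟩
  exact (mem_iff_SSat_modelOfSeq hm hX hfair (isLTLPSL_phiD P N pv hφ) M π hπ hle
    (.base (mem_subfs_self _)) 0).1 h0

/-- If the language of the generalised nondeterministic Büchi
automaton `A_{φ_D}` is non-empty, then `φ_D` is SLTL-satisfiable. -/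
theorem stmt5 (φ : SForm) (pv : ℕ × ℕ → ℕ) (P N : Finset (ℕ × ℕ))
    (hφ : isLTLPSL φ) (hinj : Function.Injective pv)
    (hfresh : ∀ pr, pv pr ∉ varsSF φ)
    (hpart : P ∪ N = leSubs φ) (hdisj : Disjoint P N) :
    LangNonempty (phiD φ P N pv) → SLTLSatisfiable (phiD φ P N pv) :=
  stmt5_general φ pv P N hφ hpart
end

section
/- Let n ≥ 1 and φ_C := G(◇_s(C_n ∧ p ∧ X G ¬p)). For every SLTL model M = (Π, λ) and every σ ∈ Π such that M, σ, 0 ⊨ φ_C, for each position i > 2ⁿ and each m ∈ {0,…,2ⁿ−1}, there exists σ' ∈ Π such that M, σ', i ⊨ C=m. -/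
/-! ### The binary-counter formula `C_n` and `φ_C` -/

/-- `¬p₁ ∧ ⋯ ∧ ¬p_n`, where `p_i := pv i`. -/
def allZero (n : ℕ) (pv : ℕ → ℕ) : SForm :=
  bigAnd ((listIcc 1 n).map (fun i => SForm.neg (SForm.var (pv i))))

/-- `p₁ ∧ ⋯ ∧ p_n`. -/
def allOne (n : ℕ) (pv : ℕ → ℕ) : SForm :=
  bigAnd ((listIcc 1 n).map (fun i => SForm.var (pv i)))

/-- The binary-counter formula `C_n` over variables `p_i := pv i`, `1 ≤ i ≤ n`,
with `p₁` the most significant bit. -/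
def Cn (n : ℕ) (pv : ℕ → ℕ) : SForm :=
  SForm.conj (allZero n pv)
    (SForm.conj (SForm.G (SForm.impl (allOne n pv) (SForm.next (allZero n pv))))
      (bigAnd ((listIcc 1 n).map (fun i =>
        SForm.G (SForm.impl
          (SForm.conj (SForm.neg (SForm.var (pv i)))
            (bigAnd ((listIcc (i + 1) n).map (fun i' => SForm.var (pv i')))))
          (SForm.conj
            (bigAnd ((listIcc (i + 1) n).map (fun i' => SForm.next (SForm.neg (SForm.var (pv i'))))))
            (SForm.conj (SForm.next (SForm.var (pv i)))
              (bigAnd ((listIcc 1 (i - 1)).map (fun i' =>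
                SForm.iffc (SForm.var (pv i')) (SForm.next (SForm.var (pv i')))))))))))))

/-- `φ_C := G(◇_s(C_n ∧ p ∧ X G ¬p))`, where `p := p0`. -/
def phiC (n : ℕ) (pv : ℕ → ℕ) (p0 s : ℕ) : SForm :=
  SForm.G (SForm.dia s (SForm.conj (Cn n pv)
    (SForm.conj (SForm.var p0) (SForm.next (SForm.G (SForm.neg (SForm.var p0)))))))

open Classical in
/-- The value of the counter at position `i` of trace `σ`: the number whose
`n`-bit binary representation `b₁…b_n` (with `b₁` most significant) is given
by `b_j = 1` iff `pv j ∈ σ i`.  `σ, i ⊨ C=m` means `cval n pv σ i = m`. -/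
noncomputable def cval (n : ℕ) (pv : ℕ → ℕ) (σ : Trace) (i : ℕ) : ℕ :=
  ∑ j ∈ Finset.Icc 1 n, if pv j ∈ σ i then 2 ^ (n - j) else 0

/-!
At every position `k`, `φ_C` supplies (through `◇_s`) a trace on which `C_n` holds from `k` on.
`C_n` forces the counter of that trace to read `0` at `k` and then to behave as a binary
increment at every step, so it reads `t` at `k + t` for all `t < 2ⁿ`. Taking `k = i - m`, the
witness trace reads `m` at position `i`.
-/

open Finset

lemma mem_listIcc {a b j : ℕ} : j ∈ listIcc a b ↔ a ≤ j ∧ j ≤ b := by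
  simp only [listIcc, List.mem_map, List.mem_range]
  constructor
  · rintro ⟨k, hk, rfl⟩
    omega
  · rintro ⟨h1, h2⟩
    exact ⟨j - a, by omega, by omega⟩

section Semantics

variable {M : SLTLModel} {σ : Trace} {i : ℕ}

lemma sSat_bigAnd {l : List SForm} : SSat M (bigAnd l) σ i ↔ ∀ a ∈ l, SSat M a σ i := by
  induction l with
  | nil => simp [bigAnd, SSat]
  | cons a l ih => simp [bigAnd, SSat, ← ih]

lemma sSat_bigAnd_listIcc {a b : ℕ} {f : ℕ → SForm} :
    SSat M (bigAnd ((listIcc a b).map f)) σ i ↔ ∀ k, a ≤ k → k ≤ b → SSat M (f k) σ i := by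
  simp only [sSat_bigAnd, List.forall_mem_map, mem_listIcc, and_imp]

lemma sSat_impl {a b : SForm} : SSat M (a.impl b) σ i ↔ (SSat M a σ i → SSat M b σ i) := by
  simp only [SForm.impl, SSat]
  tauto

lemma sSat_iffc {a b : SForm} : SSat M (a.iffc b) σ i ↔ (SSat M a σ i ↔ SSat M b σ i) := by
  simp only [SForm.iffc, SSat, sSat_impl]
  tauto

lemma sSat_G {a : SForm} : SSat M a.G σ i ↔ ∀ k, i ≤ k → SSat M a σ k := by
  simp [SForm.G, SSat]

end Semantics

section BinaryValue

variable {n : ℕ} {b b' : ℕ → Prop} [DecidablePred b] [DecidablePred b']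

lemma sum_Icc_succ_two_pow {i : ℕ} (h : i ≤ n) :
    ∑ j ∈ Icc (i + 1) n, 2 ^ (n - j) = 2 ^ (n - i) - 1 := by
  rw [show 2 ^ (n - i) - 1 = ∑ k ∈ range (n - i), 2 ^ k by simp [Nat.geomSum_eq le_rfl]]
  refine sum_nbij' (fun j => n - j) (fun k => n - k) ?_ ?_ ?_ ?_ ?_ <;>
    intro a ha <;> simp only [mem_Icc, mem_range] at * <;> omega

lemma sum_ite_two_pow_of_forall (h : ∀ j, 1 ≤ j → j ≤ n → b j) :
    ∑ j ∈ Icc 1 n, (if b j then 2 ^ (n - j) else 0) = 2 ^ n - 1 := by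
  have hall := sum_Icc_succ_two_pow (n := n) (Nat.zero_le n)
  rw [zero_add, Nat.sub_zero] at hall
  rw [← hall]
  exact sum_congr rfl fun j hj => if_pos (h j (mem_Icc.1 hj).1 (mem_Icc.1 hj).2)

/-- Bit `j` has weight `2 ^ (n - j)`, so the bits `j > i` are the less significant ones. -/
lemma sum_ite_two_pow_increment {i : ℕ} (hi1 : 1 ≤ i) (hin : i ≤ n)
    (hb : ¬ b i) (hb' : b' i)
    (hlow : ∀ j, i < j → j ≤ n → b j ∧ ¬ b' j)
    (hhigh : ∀ j, 1 ≤ j → j < i → (b' j ↔ b j)) :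
    ∑ j ∈ Icc 1 n, (if b' j then 2 ^ (n - j) else 0)
      = ∑ j ∈ Icc 1 n, (if b j then 2 ^ (n - j) else 0) + 1 := by
  have hsplit : Icc 1 n = Icc 1 (i - 1) ∪ insert i (Icc (i + 1) n) := by
    ext x
    simp only [mem_union, mem_insert, mem_Icc]
    omega
  have hdisj : Disjoint (Icc 1 (i - 1)) (insert i (Icc (i + 1) n)) := by
    simp only [disjoint_left, mem_insert, mem_Icc]
    omega
  have hi : i ∉ Icc (i + 1) n := by simp
  rw [hsplit, sum_union hdisj, sum_union hdisj, sum_insert hi, sum_insert hi, if_pos hb',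
    if_neg hb]
  have high_eq : ∑ j ∈ Icc 1 (i - 1), (if b' j then 2 ^ (n - j) else 0)
      = ∑ j ∈ Icc 1 (i - 1), (if b j then 2 ^ (n - j) else 0) := by
    refine sum_congr rfl fun j hj => ?_
    rw [mem_Icc] at hj
    simp only [hhigh j hj.1 (by omega)]
  have low_ones : ∑ j ∈ Icc (i + 1) n, (if b j then 2 ^ (n - j) else 0) = 2 ^ (n - i) - 1 := by
    rw [← sum_Icc_succ_two_pow hin]
    refine sum_congr rfl fun j hj => ?_
    rw [mem_Icc] at hj
    rw [if_pos (hlow j (by omega) hj.2).1]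
  have low_zeros : ∑ j ∈ Icc (i + 1) n, (if b' j then 2 ^ (n - j) else 0) = 0 := by
    refine sum_eq_zero fun j hj => ?_
    rw [mem_Icc] at hj
    rw [if_neg (hlow j (by omega) hj.2).2]
  rw [high_eq, low_ones, low_zeros]
  have : 1 ≤ 2 ^ (n - i) := Nat.one_le_two_pow
  omega

end BinaryValue

lemma exists_last_false {b : ℕ → Prop} {n k : ℕ} (hk1 : 1 ≤ k) (hkn : k ≤ n) (hk : ¬ b k) :
    ∃ i, 1 ≤ i ∧ i ≤ n ∧ ¬ b i ∧ ∀ j, i < j → j ≤ n → b j := by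
  classical
  set P : ℕ → Prop := fun k => 1 ≤ k ∧ ¬ b k
  set i := Nat.findGreatest P n
  obtain ⟨hi1, hi⟩ : P i := Nat.findGreatest_spec hkn ⟨hk1, hk⟩
  refine ⟨i, hi1, Nat.findGreatest_le n, hi, fun j hij hjn => ?_⟩
  by_contra hj
  exact Nat.findGreatest_is_greatest hij hjn ⟨by omega, hj⟩

section Counter

variable {M : SLTLModel} {n : ℕ} {pv : ℕ → ℕ} {σ : Trace} {j : ℕ}

lemma notMem_of_sSat_Cn (hC : SSat M (Cn n pv) σ j) {k : ℕ} (hk1 : 1 ≤ k) (hkn : k ≤ n) :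
    pv k ∉ σ j := by
  have hzero := hC.1
  simp only [allZero, sSat_bigAnd_listIcc, SSat] at hzero
  exact hzero k hk1 hkn

lemma bits_succ_of_sSat_Cn (hC : SSat M (Cn n pv) σ j) {q k : ℕ} (hq : j ≤ q)
    (hk1 : 1 ≤ k) (hkn : k ≤ n) (hk : pv k ∉ σ q)
    (hlow : ∀ k', k < k' → k' ≤ n → pv k' ∈ σ q) :
    pv k ∈ σ (q + 1) ∧ (∀ k', k < k' → k' ≤ n → pv k' ∈ σ q ∧ pv k' ∉ σ (q + 1)) ∧
      ∀ k', 1 ≤ k' → k' < k → (pv k' ∈ σ (q + 1) ↔ pv k' ∈ σ q) := by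
  have hstep := hC.2.2
  simp only [sSat_bigAnd_listIcc, sSat_G, sSat_impl, sSat_iffc, SSat] at hstep
  obtain ⟨hlow', hk', hhigh⟩ := hstep k hk1 hkn q hq ⟨hk, hlow⟩
  exact ⟨hk', fun k' h1 h2 => ⟨hlow k' h1 h2, hlow' k' h1 h2⟩,
    fun k' h1 h2 => (hhigh k' h1 (by omega)).symm⟩

lemma cval_add_of_sSat_Cn (hC : SSat M (Cn n pv) σ j) {t : ℕ} (ht : t < 2 ^ n) :
    cval n pv σ (j + t) = t := by
  classical
  induction t with
  | zero =>
    refine sum_eq_zero fun k hk => ?_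
    rw [mem_Icc] at hk
    exact if_neg (notMem_of_sSat_Cn hC hk.1 hk.2)
  | succ t ih =>
    have hval : cval n pv σ (j + t) = t := ih (by omega)
    obtain ⟨k, hk1, hkn, hk⟩ : ∃ k, 1 ≤ k ∧ k ≤ n ∧ pv k ∉ σ (j + t) := by
      by_contra! hall
      have := sum_ite_two_pow_of_forall (b := (pv · ∈ σ (j + t))) hall
      rw [← cval, hval] at this
      omega
    obtain ⟨i, hi1, hin, hi, hlow⟩ := exists_last_false (b := (pv · ∈ σ (j + t))) hk1 hkn hk
    obtain ⟨hi', hlow', hhigh⟩ := bits_succ_of_sSat_Cn hC (le_add_right le_rfl) hi1 hin hi hlow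
    have hinc := sum_ite_two_pow_increment hi1 hin hi hi' hlow' hhigh
    rw [← cval, ← cval, hval] at hinc
    rwa [← add_assoc]

end Counter

theorem stmt8_general (n : ℕ) (pv : ℕ → ℕ)
    (p0 : ℕ) (s : ℕ)
    (M : SLTLModel) (σ : Trace)
    (h : SSat M (phiC n pv p0 s) σ 0) :
    ∀ i, 2 ^ n < i → ∀ m, m < 2 ^ n → ∃ σ' ∈ M.Pi, cval n pv σ' i = m := by
  intro i hi m hm
  obtain ⟨σ', hσ', hC, -⟩ := sSat_G.mp h (i - m) (Nat.zero_le _)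
  refine ⟨σ', M.lam_sub s hσ', ?_⟩
  simpa [Nat.sub_add_cancel (by omega : m ≤ i)] using cval_add_of_sSat_Cn hC hm

/-- For every SLTL model `M = (Π, λ)` and `σ ∈ Π` with
`M, σ, 0 ⊨ φ_C`, for each position `i > 2ⁿ` and each `m ∈ {0,…,2ⁿ−1}`, there
is `σ' ∈ Π` with `M, σ', i ⊨ C=m`. -/
theorem stmt8 (n : ℕ) (hn : 1 ≤ n) (pv : ℕ → ℕ)
    (hinj : ∀ i ∈ Finset.Icc 1 n, ∀ j ∈ Finset.Icc 1 n, pv i = pv j → i = j)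
    (p0 : ℕ) (hp0 : ∀ i ∈ Finset.Icc 1 n, pv i ≠ p0) (s : ℕ)
    (M : SLTLModel) (σ : Trace) (hσ : σ ∈ M.Pi)
    (h : SSat M (phiC n pv p0 s) σ 0) :
    ∀ i, 2 ^ n < i → ∀ m, m < 2 ^ n → ∃ σ' ∈ M.Pi, cval n pv σ' i = m :=
  stmt8_general n pv p0 s M σ h
end
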